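/- arXiv:1810.08523 — 2 statements merged into one kernel-verified Lean document; each statement's English description precedes it below -/
import Mathlib

section
/- For q ∈ (0,1), n ≥ 2, and all x ≥ 0, |v_n(x) - x| ≤ (1 - sqrt(q(1 - 1/[n]_q)))·x + 1/(2[n]_q), where v_n(x) = sqrt( ((q[n]_q - q)/[n]_q) x^2 + 1/(4[n]_q^2) ) - 1/(2[n]_q). -/
/-!
Write `c = q (1 - 1/[n]_q)` and `ε = 1/(2[n]_q)`, so that `v_n(x) = √(c x² + ε²) - ε`.
Since `1 ≤ [n]_q` we have `0 ≤ c ≤ 1`, and squaring gives `√c x ≤ √(c x² + ε²) ≤ √c x + ε`.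
Hence `v_n(x) - x` lies between `-((1 - √c) x + ε)` and `-(1 - √c) x ≤ 0`.
-/

theorem one_le_one_sub_pow_div_one_sub {K : Type*} [Field K] [LinearOrder K]
    [IsStrictOrderedRing K] {q : K} (hq0 : 0 ≤ q) (hq1 : q ≠ 1) {n : ℕ} (hn : n ≠ 0) :
    1 ≤ (1 - q ^ n) / (1 - q) := by
  rw [← neg_div_neg_eq, neg_sub, neg_sub, ← geom_sum_eq hq1]
  simpa using Finset.single_le_sum (fun i _ => pow_nonneg hq0 i)
    (Finset.mem_range.mpr (Nat.pos_of_ne_zero hn))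

theorem abs_sqrt_mul_sq_add_sq_sub_sub_le {c ε x : ℝ} (hc0 : 0 ≤ c) (hc1 : c ≤ 1)
    (hε : 0 ≤ ε) (hx : 0 ≤ x) :
    |√(c * x ^ 2 + ε ^ 2) - ε - x| ≤ (1 - √c) * x + ε := by
  have hs0 : 0 ≤ √c := Real.sqrt_nonneg c
  have hs1 : √c ≤ 1 := Real.sqrt_le_one.mpr hc1
  have hsq : √c ^ 2 = c := Real.sq_sqrt hc0
  have hupper : √(c * x ^ 2 + ε ^ 2) ≤ √c * x + ε :=
    Real.sqrt_le_iff.mpr ⟨by positivity, by nlinarith [mul_nonneg (mul_nonneg hs0 hx) hε]⟩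
  have hlower : √c * x ≤ √(c * x ^ 2 + ε ^ 2) :=
    Real.le_sqrt_of_sq_le (by nlinarith [sq_nonneg ε])
  have hgap : 0 ≤ (1 - √c) * x := mul_nonneg (by linarith) hx
  rw [abs_le]
  constructor <;> linarith

theorem abs_vn_sub_x_le (q : ℝ) (hq0 : 0 < q) (hq1 : q < 1) (n : ℕ) (hn : 2 ≤ n)
    (x : ℝ) (hx : 0 ≤ x) :
    |Real.sqrt ((q * ((1 - q ^ n) / (1 - q)) - q) / ((1 - q ^ n) / (1 - q)) * x ^ 2
          + 1 / (4 * ((1 - q ^ n) / (1 - q)) ^ 2))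
        - 1 / (2 * ((1 - q ^ n) / (1 - q))) - x|
      ≤ (1 - Real.sqrt (q * (1 - 1 / ((1 - q ^ n) / (1 - q))))) * x
          + 1 / (2 * ((1 - q ^ n) / (1 - q))) := by
  have hN : 1 ≤ (1 - q ^ n) / (1 - q) :=
    one_le_one_sub_pow_div_one_sub hq0.le hq1.ne (by omega)
  generalize (1 - q ^ n) / (1 - q) = N at hN ⊢
  have hN0 : 0 < N := one_pos.trans_le hN
  have hinv : 1 / N ≤ 1 := (div_le_one hN0).mpr hN
  have hc : (q * N - q) / N = q * (1 - 1 / N) := by field_simp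
  have hε : 1 / (4 * N ^ 2) = (1 / (2 * N)) ^ 2 := by ring
  rw [hc, hε]
  exact abs_sqrt_mul_sq_add_sq_sub_sub_le (mul_nonneg hq0.le (by linarith))
    (mul_le_one₀ hq1.le (by linarith) (by linarith [one_div_pos.mpr hN0])) (by positivity) hx
end

section
/- For q ∈ (0,1) and n ≥ 2, the supremum over x ∈ [0,∞) of |v_n(x) - x|/(1 + x^2) is at most (1 - sqrt(q(1 - 1/[n]_q))) + 1/(2[n]_q). -/
theorem weighted_norm_bound (q : ℝ) (hq0 : 0 < q) (hq1 : q < 1) (n : ℕ) (hn : 2 ≤ n) :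
    ∀ x : ℝ, 0 ≤ x →
      |Real.sqrt (q * (1 - 1 / ((1 - q ^ n) / (1 - q))) * x ^ 2
            + 1 / (4 * ((1 - q ^ n) / (1 - q)) ^ 2))
          - 1 / (2 * ((1 - q ^ n) / (1 - q))) - x| / (1 + x ^ 2)
        ≤ (1 - Real.sqrt (q * (1 - 1 / ((1 - q ^ n) / (1 - q)))))
            + 1 / (2 * ((1 - q ^ n) / (1 - q))) := by
  intro x hx
  set N : ℝ := (1 - q ^ n) / (1 - q) with hNdef
  have hq1' : (0:ℝ) < 1 - q := by linarith
  have hqn : q ^ n ≤ q := by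
    calc q ^ n ≤ q ^ 1 := pow_le_pow_of_le_one hq0.le hq1.le (by omega)
    _ = q := pow_one q
  have hN1 : 1 ≤ N := by
    rw [hNdef, le_div_iff₀ hq1']
    linarith
  have hNpos : (0:ℝ) < N := by linarith
  set α : ℝ := q * (1 - 1 / N) with hαdef
  set β : ℝ := 1 / (2 * N) with hβdef
  have hβpos : 0 < β := by positivity
  have hα0 : 0 ≤ α := by
    have : 1 / N ≤ 1 := by
      rw [div_le_one hNpos]; exact hN1
    have h1 : 0 ≤ 1 - 1 / N := by linarith
    positivity
  have hα1 : α ≤ 1 := by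
    have h1 : 0 ≤ 1 / N := by positivity
    nlinarith
  have hsq : 1 / (4 * N ^ 2) = β ^ 2 := by
    rw [hβdef]; field_simp; ring
  rw [hsq]
  have hsqα : Real.sqrt α ^ 2 = α := Real.sq_sqrt hα0
  have hsα1 : Real.sqrt α ≤ 1 := by
    rw [show (1:ℝ) = Real.sqrt 1 by simp]
    exact Real.sqrt_le_sqrt hα1
  have hsα0 : 0 ≤ Real.sqrt α := Real.sqrt_nonneg α
  -- upper bound on sqrt
  have hup : Real.sqrt (α * x ^ 2 + β ^ 2) ≤ Real.sqrt α * x + β := by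
    have h1 : α * x ^ 2 + β ^ 2 ≤ (Real.sqrt α * x + β) ^ 2 := by
      nlinarith [mul_nonneg (mul_nonneg hsα0 hx) hβpos.le]
    calc Real.sqrt (α * x ^ 2 + β ^ 2) ≤ Real.sqrt ((Real.sqrt α * x + β) ^ 2) :=
          Real.sqrt_le_sqrt h1
      _ = Real.sqrt α * x + β := Real.sqrt_sq (by positivity)
  -- lower bound on sqrt
  have hlo : Real.sqrt α * x ≤ Real.sqrt (α * x ^ 2 + β ^ 2) := by
    have h1 : (Real.sqrt α * x) ^ 2 ≤ α * x ^ 2 + β ^ 2 := by nlinarith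
    calc Real.sqrt α * x = Real.sqrt ((Real.sqrt α * x) ^ 2) :=
          (Real.sqrt_sq (by positivity)).symm
      _ ≤ Real.sqrt (α * x ^ 2 + β ^ 2) := Real.sqrt_le_sqrt h1
  have habs : |Real.sqrt (α * x ^ 2 + β ^ 2) - β - x| ≤ (1 - Real.sqrt α) * x + β := by
    rw [abs_le]
    constructor
    · nlinarith
    · nlinarith [mul_nonneg (sub_nonneg.mpr hsα1) hx]
  have hden : (0:ℝ) < 1 + x ^ 2 := by positivity
  rw [div_le_iff₀ hden]
  nlinarith [habs, sq_nonneg x, mul_nonneg (sub_nonneg.mpr hsα1) (sq_nonneg x),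
    mul_nonneg hβpos.le (sq_nonneg x), sq_nonneg (x - 1),
    mul_nonneg (sub_nonneg.mpr hsα1) (sq_nonneg (x-1))]
end
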